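/- Let A-cal(s) be the unique formal power series in x (with coefficients polynomial in s and q) satisfying A-cal(s) = 1 + xsq + x·(1 + xsq/(1-sq²))·A-cal(1) - (x²s²q³/(1-sq²))·A-cal(sq²). Then A-cal(1) = J-cal(-xq)/J-cal(x), where J-cal(x) = Σ_{n≥0} (-1)^{⌈n/2⌉} x^n q^{n(n-1)/2} / (q²;q²)_{⌊n/2⌋}. -/

import Mathlib

/-! Multiplied by `1 - sq²`, the functional equation becomes an identity between power series
with coefficients in `ℚ(q)[s]`, which can be specialised at `s = q^{2k}`. Writing
`a_k = 𝒜(q^{2k})`, this gives the relations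
`(1 - q^{2k+2}) a_k = (1 - q^{2k+2})(1 + x q^{2k+1} + x a_0) + x² q^{2k+1} a_0 - x² q^{4k+3} a_{k+1}`
with `a_0 = 𝒜(1)`. Summing the `k`-th relation with weight
`x^{2k} (-1)^k q^{2k²+k} / (q²;q²)_{k+1}` telescopes (the kernel method), and the weights that
appear are exactly the coefficients of `𝒥(x)` and `𝒥(-xq)`. Hence `𝒥(x) 𝒜(1) ≡ 𝒥(-xq)` modulo
`x^{2N}` for every `N`. -/

open PowerSeries

noncomputable section
namespace FC

/-- The field `ℚ(q)` of rational functions in `q`. -/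
abbrev K : Type := RatFunc ℚ

/-- The variable `q`. -/
def q : K := RatFunc.X

/-- The field `ℚ(q)(s)` of rational functions in `s` over `ℚ(q)`. -/
abbrev S : Type := RatFunc K

/-- The variable `s`. -/
def sS : S := RatFunc.X

/-- `q` as an element of `ℚ(q)(s)`. -/
def qS : S := RatFunc.C q

/-- A power series in `x` over `ℚ(q)(s)` has coefficients polynomial in `s`
(and hence in `s` and `q`, up to denominators in `q` alone). -/
def PolyCoeffs (A : PowerSeries S) : Prop :=
  ∀ n, (PowerSeries.coeff n A).denom = 1

/-- Evaluation of a rational function of `s` at `s = 1`. -/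
def ev1 (f : S) : K := RatFunc.eval (RingHom.id K) 1 f

/-- `A(1)`: evaluate each coefficient at `s = 1`, giving a power series in `x` over `ℚ(q)`. -/
def atOneK (A : PowerSeries S) : PowerSeries K :=
  PowerSeries.mk fun n => ev1 (PowerSeries.coeff n A)

/-- `A(1)`, lifted back to a power series over `ℚ(q)(s)`. -/
def atOne (A : PowerSeries S) : PowerSeries S :=
  PowerSeries.mk fun n => RatFunc.C (ev1 (PowerSeries.coeff n A))

/-- Substitution `s ↦ s·q^j` in each coefficient. -/
def atSq (j : ℕ) (A : PowerSeries S) : PowerSeries S :=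
  PowerSeries.mk fun n =>
    RatFunc.eval (RatFunc.C : K →+* S) (RatFunc.C (q ^ j) * RatFunc.X)
      (PowerSeries.coeff n A)

/-- `(q²;q²)_m = ∏_{i=1}^{m} (1 - q^{2i})`. -/
def poch2 (m : ℕ) : K := ∏ i ∈ Finset.range m, (1 - q ^ (2 * (i + 1)))

/-- `𝒥(x) = Σ_{n≥0} (-1)^{⌈n/2⌉} x^n q^{C(n,2)} / (q²;q²)_{⌊n/2⌋}`. -/
def Jcal : PowerSeries K :=
  PowerSeries.mk fun n => (-1 : K) ^ ((n + 1) / 2) * q ^ n.choose 2 / poch2 (n / 2)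

open Finset

lemma sum_pow_mul_eq_of_recurrence {R : Type*} [CommRing R] (y : R) (a c d w r : ℕ → R)
    (hrec : ∀ k, c k * a k = r k - y * d k * a (k + 1))
    (hw : ∀ k, w k * d k = -(w (k + 1) * c (k + 1))) (N : ℕ) :
    ∑ k ∈ range N, y ^ k * w k * r k = w 0 * c 0 * a 0 - y ^ N * w N * c N * a N := by
  have hstep (k : ℕ) : y ^ k * w k * r k =
      y ^ k * w k * c k * a k - y ^ (k + 1) * w (k + 1) * c (k + 1) * a (k + 1) := by
    linear_combination (-(y ^ k * w k)) * hrec k + (y ^ (k + 1) * a (k + 1)) * hw k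
  rw [sum_congr rfl fun k _ => hstep k, sum_range_sub']
  simp

lemma coe_trunc_one {R : Type*} [CommSemiring R] (f : R⟦X⟧) :
    (trunc 1 f : R⟦X⟧) = C (coeff 0 f) := by
  simp [trunc_succ]

lemma coe_trunc_two_mul_add {R : Type*} [CommSemiring R] (f : R⟦X⟧) (m N : ℕ) :
    (trunc (2 * N + m) f : R⟦X⟧) = trunc m f + ∑ k ∈ range N,
      (C (coeff (2 * k + m) f) * X ^ (2 * k + m)
        + C (coeff (2 * k + m + 1) f) * X ^ (2 * k + m + 1)) := by
  induction N with
  | zero => simp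
  | succ N ih =>
    rw [show 2 * (N + 1) + m = (2 * N + m + 1) + 1 by ring, trunc_succ, trunc_succ,
      sum_range_succ, Polynomial.coe_add, Polynomial.coe_add, ih, Polynomial.coe_monomial,
      Polynomial.coe_monomial, monomial_eq_C_mul_X_pow, monomial_eq_C_mul_X_pow]
    ring

lemma X_pow_dvd_sub_trunc {R : Type*} [CommRing R] (f : R⟦X⟧) (n : ℕ) :
    X ^ n ∣ f - (trunc n f : R⟦X⟧) :=
  ⟨_, sub_eq_of_eq_add (eq_X_pow_mul_shift_add_trunc n f)⟩

lemma eq_zero_of_forall_X_pow_dvd {R : Type*} [Semiring R] {f : R⟦X⟧}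
    (h : ∀ n, X ^ n ∣ f) : f = 0 := by
  ext n
  simpa using X_pow_dvd_iff.mp (h (n + 1)) n n.lt_succ_self

lemma one_sub_q_pow_ne_zero {m : ℕ} (hm : m ≠ 0) : 1 - q ^ m ≠ 0 := by
  intro h
  have hX : (Polynomial.X : Polynomial ℚ) ^ m = 1 := by
    apply RatFunc.algebraMap_injective ℚ
    rw [map_pow, RatFunc.algebraMap_X, map_one, ← q]
    exact (sub_eq_zero.mp h).symm
  simpa [zero_pow hm] using congrArg (Polynomial.eval 0) hX

lemma poch2_ne_zero (m : ℕ) : poch2 m ≠ 0 :=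
  prod_ne_zero_iff.mpr fun i _ => one_sub_q_pow_ne_zero (by omega)

lemma poch2_succ (m : ℕ) : poch2 (m + 1) = poch2 m * (1 - q ^ (2 * m + 2)) := by
  rw [poch2, prod_range_succ, ← poch2]; ring_nf

lemma choose_two_two_mul_add_one (k : ℕ) : (2 * k + 1).choose 2 = 2 * k ^ 2 + k := by
  rw [Nat.choose_two_right]
  exact Nat.div_eq_of_eq_mul_left two_pos (by simp; ring)

lemma choose_two_two_mul_add_two (k : ℕ) : (2 * k + 2).choose 2 = 2 * k ^ 2 + 3 * k + 1 := by
  rw [Nat.choose_two_right]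
  exact Nat.div_eq_of_eq_mul_left two_pos (by simp; ring)

lemma two_mul_add_choose_two (k : ℕ) : 2 * k + (2 * k).choose 2 = 2 * k ^ 2 + k := by
  rw [← choose_two_two_mul_add_one, Nat.choose_succ_succ', Nat.choose_one_right]

lemma coeff_Jcal (n : ℕ) :
    coeff n Jcal = (-1 : K) ^ ((n + 1) / 2) * q ^ n.choose 2 / poch2 (n / 2) :=
  coeff_mk _ _

lemma coeff_zero_Jcal : coeff 0 Jcal = 1 := by
  simp [coeff_Jcal, poch2]

def kernelWeight (k : ℕ) : K := (-1) ^ k * q ^ (2 * k ^ 2 + k) / poch2 (k + 1)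

lemma kernelWeight_mul_one_sub (k : ℕ) :
    kernelWeight k * (1 - q ^ (2 * k + 2)) = (-1) ^ k * q ^ (2 * k ^ 2 + k) / poch2 k := by
  have := poch2_ne_zero k
  have := one_sub_q_pow_ne_zero (m := 2 * k + 2) (by omega)
  rw [kernelWeight, poch2_succ]
  field_simp

lemma kernelWeight_mul_q_pow (k : ℕ) :
    kernelWeight k * q ^ (4 * k + 3) = -(kernelWeight (k + 1) * (1 - q ^ (2 * (k + 1) + 2))) := by
  rw [kernelWeight_mul_one_sub, kernelWeight, poch2_succ]
  have := poch2_ne_zero k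
  have := one_sub_q_pow_ne_zero (m := 2 * k + 2) (by omega)
  field_simp
  ring

lemma coeff_rescale_Jcal_two_mul (k : ℕ) :
    coeff (2 * k) (rescale (-q) Jcal) = kernelWeight k * (1 - q ^ (2 * k + 2)) := by
  rw [coeff_rescale, coeff_Jcal, kernelWeight_mul_one_sub, ← two_mul_add_choose_two, pow_add,
    pow_mul, neg_sq, ← pow_mul, show (2 * k + 1) / 2 = k by omega, show 2 * k / 2 = k by omega]
  ring

lemma coeff_rescale_Jcal_two_mul_add_one (k : ℕ) :
    coeff (2 * k + 1) (rescale (-q) Jcal) =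
      kernelWeight k * (1 - q ^ (2 * k + 2)) * q ^ (2 * k + 1) := by
  rw [coeff_rescale, coeff_Jcal, kernelWeight_mul_one_sub, choose_two_two_mul_add_one,
    show (2 * k + 1 + 1) / 2 = k + 1 by omega, show (2 * k + 1) / 2 = k by omega, neg_pow,
    pow_succ (-1 : K) k, pow_succ (-1 : K) (2 * k), pow_mul]
  ring

lemma coeff_Jcal_two_mul_add_one (k : ℕ) :
    coeff (2 * k + 1) Jcal = -(kernelWeight k * (1 - q ^ (2 * k + 2))) := by
  rw [coeff_Jcal, kernelWeight_mul_one_sub, choose_two_two_mul_add_one,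
    show (2 * k + 1 + 1) / 2 = k + 1 by omega, show (2 * k + 1) / 2 = k by omega]
  ring

lemma coeff_Jcal_two_mul_add_two (k : ℕ) :
    coeff (2 * k + 2) Jcal = -(kernelWeight k * q ^ (2 * k + 1)) := by
  rw [coeff_Jcal, kernelWeight, choose_two_two_mul_add_two,
    show (2 * k + 2 + 1) / 2 = k + 1 by omega, show (2 * k + 2) / 2 = k + 1 by omega]
  ring

lemma trunc_Jcal_mul_eq_of_recurrence (a : ℕ → K⟦X⟧)
    (hrec : ∀ k, C (1 - q ^ (2 * k + 2)) * a k =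
      C (1 - q ^ (2 * k + 2)) * (1 + C (q ^ (2 * k + 1)) * X + X * a 0)
        + C (q ^ (2 * k + 1)) * X ^ 2 * a 0 - X ^ 2 * C (q ^ (4 * k + 3)) * a (k + 1)) (N : ℕ) :
    (trunc (2 * N + 1) Jcal : K⟦X⟧) * a 0 =
      (trunc (2 * N) (rescale (-q) Jcal) : K⟦X⟧)
        + X ^ (2 * N) * (C (kernelWeight N) * C (1 - q ^ (2 * N + 2)) * a N) := by
  set J' := rescale (-q) Jcal
  have htel := sum_pow_mul_eq_of_recurrence (X ^ 2) a _ _ (fun k => C (kernelWeight k)) _ hrec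
    (fun k => by rw [← map_mul, kernelWeight_mul_q_pow, map_neg, map_mul]) N
  have hterm (k : ℕ) : (X ^ 2) ^ k * C (kernelWeight k) *
      (C (1 - q ^ (2 * k + 2)) * (1 + C (q ^ (2 * k + 1)) * X + X * a 0)
        + C (q ^ (2 * k + 1)) * X ^ 2 * a 0) =
      (C (coeff (2 * k) J') * X ^ (2 * k) + C (coeff (2 * k + 1) J') * X ^ (2 * k + 1))
        - (C (coeff (2 * k + 1) Jcal) * X ^ (2 * k + 1)
          + C (coeff (2 * k + 1 + 1) Jcal) * X ^ (2 * k + 1 + 1)) * a 0 := by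
    simp only [add_assoc, Nat.reduceAdd, J', coeff_rescale_Jcal_two_mul,
      coeff_rescale_Jcal_two_mul_add_one, coeff_Jcal_two_mul_add_one,
      coeff_Jcal_two_mul_add_two, map_mul, map_neg]
    ring
  have hw0 : kernelWeight 0 * (1 - q ^ (2 * 0 + 2)) = 1 := by
    rw [← coeff_rescale_Jcal_two_mul, coeff_rescale, coeff_zero_Jcal, pow_zero, mul_one]
  rw [sum_congr rfl fun k _ => hterm k, sum_sub_distrib, ← sum_mul, ← map_mul, hw0, map_one,
    one_mul] at htel
  have hT' := coe_trunc_two_mul_add J' 0 N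
  have hT := coe_trunc_two_mul_add Jcal 1 N
  simp only [add_zero, trunc_zero', Polynomial.coe_zero, zero_add] at hT'
  rw [coe_trunc_one, coeff_zero_Jcal, map_one] at hT
  linear_combination a 0 * hT - hT' - htel

lemma Jcal_mul_eq_of_recurrence (a : ℕ → K⟦X⟧)
    (hrec : ∀ k, C (1 - q ^ (2 * k + 2)) * a k =
      C (1 - q ^ (2 * k + 2)) * (1 + C (q ^ (2 * k + 1)) * X + X * a 0)
        + C (q ^ (2 * k + 1)) * X ^ 2 * a 0 - X ^ 2 * C (q ^ (4 * k + 3)) * a (k + 1)) :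
    Jcal * a 0 = rescale (-q) Jcal := by
  refine sub_eq_zero.mp (eq_zero_of_forall_X_pow_dvd fun N => ?_)
  have hsplit : Jcal * a 0 - rescale (-q) Jcal =
      (Jcal - (trunc (2 * N + 1) Jcal : K⟦X⟧)) * a 0
        - (rescale (-q) Jcal - (trunc (2 * N) (rescale (-q) Jcal) : K⟦X⟧))
        + X ^ (2 * N) * (C (kernelWeight N) * C (1 - q ^ (2 * N + 2)) * a N) := by
    linear_combination trunc_Jcal_mul_eq_of_recurrence a hrec N
  rw [hsplit]
  refine (pow_dvd_pow X (by omega : N ≤ 2 * N)).trans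
    (dvd_add (dvd_sub ?_ (X_pow_dvd_sub_trunc _ _)) (dvd_mul_right _ _))
  exact ((pow_dvd_pow X (by omega)).trans (X_pow_dvd_sub_trunc Jcal _)).mul_right _

local notation "ι" => algebraMap (Polynomial K) S

lemma exists_map_eq_of_polyCoeffs {A : PowerSeries S} (h : PolyCoeffs A) :
    ∃ P : PowerSeries (Polynomial K), map ι P = A :=
  ⟨mk fun n => (coeff n A).num, by
    ext n
    rw [coeff_map, coeff_mk, ← div_one (ι _), ← map_one ι, ← h n, RatFunc.num_div_denom]⟩

lemma atOneK_map (P : PowerSeries (Polynomial K)) :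
    atOneK (map ι P) = map (Polynomial.evalRingHom 1) P := by
  ext n
  simp [atOneK, ev1]

lemma atOne_eq_map_atOneK (A : PowerSeries S) :
    atOne A = map ι (map Polynomial.C (atOneK A)) := by
  ext n
  simp [atOne, atOneK]

lemma atSq_map (j : ℕ) (P : PowerSeries (Polynomial K)) :
    atSq j (map ι P) =
      map ι (map (Polynomial.compRingHom (Polynomial.C (q ^ j) * Polynomial.X)) P) := by
  ext n
  simp only [atSq, coeff_mk, coeff_map, RatFunc.eval_algebraMap, Algebra.algebraMap_self,
    RingHom.id_apply, Polynomial.coe_compRingHom_apply, Polynomial.comp, Polynomial.hom_eval₂,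
    RatFunc.algebraMap_comp_C, map_mul, RatFunc.algebraMap_C, RatFunc.algebraMap_X]

lemma functionalEquation_mul_denom (P : PowerSeries (Polynomial K))
    (hA : map ι P = 1 + PowerSeries.C (sS * qS) * PowerSeries.X
        + (PowerSeries.X
            + PowerSeries.X ^ 2 * PowerSeries.C (sS * qS / (1 - sS * qS ^ 2))) * atOne (map ι P)
        - PowerSeries.X ^ 2 * PowerSeries.C (sS ^ 2 * qS ^ 3 / (1 - sS * qS ^ 2)) *
            atSq 2 (map ι P)) :
    C (1 - Polynomial.C (q ^ 2) * Polynomial.X) * P =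
      C (1 - Polynomial.C (q ^ 2) * Polynomial.X) *
          (1 + C (Polynomial.C q * Polynomial.X) * X + X * map Polynomial.C (atOneK (map ι P)))
        + C (Polynomial.C q * Polynomial.X) * X ^ 2 * map Polynomial.C (atOneK (map ι P))
        - X ^ 2 * C (Polynomial.C (q ^ 3) * Polynomial.X ^ 2)
          * map (Polynomial.compRingHom (Polynomial.C (q ^ 2) * Polynomial.X)) P := by
  rw [atSq_map, atOne_eq_map_atOneK] at hA
  generalize map (Polynomial.compRingHom (Polynomial.C (q ^ 2) * Polynomial.X)) P = R at hA ⊢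
  generalize map Polynomial.C (atOneK (map ι P)) = B at hA ⊢
  have hd : 1 - sS * qS ^ 2 ≠ 0 := by
    have hι : (1 : S) - sS * qS ^ 2 = ι (1 - Polynomial.C (q ^ 2) * Polynomial.X) := by
      simp [sS, qS, mul_comm]
    rw [hι]
    exact RatFunc.algebraMap_ne_zero fun h => by simpa using congrArg (Polynomial.eval 0) h
  apply map_injective _ (RatFunc.algebraMap_injective K)
  have e1 : C (1 - sS * qS ^ 2) * C (sS * qS / (1 - sS * qS ^ 2)) = C (sS * qS) := by
    rw [← map_mul, mul_div_cancel₀ _ hd]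
  have e2 : C (1 - sS * qS ^ 2) * C (sS ^ 2 * qS ^ 3 / (1 - sS * qS ^ 2)) =
      C (sS ^ 2 * qS ^ 3) := by
    rw [← map_mul, mul_div_cancel₀ _ hd]
  have hX : (RatFunc.X : S) = sS := rfl
  have hq : (RatFunc.C q : S) = qS := rfl
  simp only [map_mul, map_add, map_sub, map_one, map_pow, map_C, map_X, RatFunc.algebraMap_C,
    RatFunc.algebraMap_X, hX, hq] at hA e1 e2 ⊢
  linear_combination (1 - C sS * C qS ^ 2) * hA + X ^ 2 * map ι B * e1 - X ^ 2 * map ι R * e2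

lemma eval_functionalEquation (P : PowerSeries (Polynomial K))
    (hA : map ι P = 1 + PowerSeries.C (sS * qS) * PowerSeries.X
        + (PowerSeries.X
            + PowerSeries.X ^ 2 * PowerSeries.C (sS * qS / (1 - sS * qS ^ 2))) * atOne (map ι P)
        - PowerSeries.X ^ 2 * PowerSeries.C (sS ^ 2 * qS ^ 3 / (1 - sS * qS ^ 2)) *
            atSq 2 (map ι P)) (t : K) :
    C (1 - q ^ 2 * t) * map (Polynomial.evalRingHom t) P =
      C (1 - q ^ 2 * t) * (1 + C (q * t) * X + X * atOneK (map ι P))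
        + C (q * t) * X ^ 2 * atOneK (map ι P)
        - X ^ 2 * C (q ^ 3 * t ^ 2) * map (Polynomial.evalRingHom (q ^ 2 * t)) P := by
  have hC (B : PowerSeries K) : map (Polynomial.evalRingHom t) (map Polynomial.C B) = B := by
    ext n; simp
  have hcomp : map (Polynomial.evalRingHom t)
      (map (Polynomial.compRingHom (Polynomial.C (q ^ 2) * Polynomial.X)) P) =
        map (Polynomial.evalRingHom (q ^ 2 * t)) P := by
    ext n; simp [Polynomial.eval_comp]
  have h := congrArg (map (Polynomial.evalRingHom t)) (functionalEquation_mul_denom P hA)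
  simp only [map_add, map_sub, map_mul, map_one, map_C, map_X, hC, hcomp] at h
  simpa using h

/-- If `𝒜(s)` (a power series in `x` with coefficients polynomial in `s` and `q`) satisfies
`𝒜(s) = 1 + xsq + x·(1 + xsq/(1-sq²))·𝒜(1) - (x²s²q³/(1-sq²))·𝒜(sq²)`,
then `𝒜(1) = 𝒥(-xq)/𝒥(x)`. -/
theorem stmt16 (A : PowerSeries S) (hpoly : PolyCoeffs A)
    (hA : A = 1 + PowerSeries.C (sS * qS) * PowerSeries.X
        + (PowerSeries.X
            + PowerSeries.X ^ 2 * PowerSeries.C (sS * qS / (1 - sS * qS ^ 2))) * atOne A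
        - PowerSeries.X ^ 2 * PowerSeries.C (sS ^ 2 * qS ^ 3 / (1 - sS * qS ^ 2)) *
            atSq 2 A) :
    atOneK A = rescale (-q) Jcal * Jcal⁻¹ := by
  obtain ⟨P, rfl⟩ := exists_map_eq_of_polyCoeffs hpoly
  have hJ := Jcal_mul_eq_of_recurrence (fun k => map (Polynomial.evalRingHom (q ^ (2 * k))) P)
    fun k => by
      have h := eval_functionalEquation P hA (q ^ (2 * k))
      rw [show q ^ 2 * q ^ (2 * k) = q ^ (2 * (k + 1)) by ring,
        show q * q ^ (2 * k) = q ^ (2 * k + 1) by ring,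
        show q ^ 3 * (q ^ (2 * k)) ^ 2 = q ^ (4 * k + 3) by ring, atOneK_map] at h
      simpa [mul_add] using h
  rw [eq_mul_inv_iff_mul_eq (by simp [← coeff_zero_eq_constantCoeff_apply, coeff_zero_Jcal]),
    atOneK_map, mul_comm]
  simpa using hJ

end FC
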